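/- arXiv:2508.17850 — 2 statements merged into one kernel-verified Lean document; each statement's English description precedes it below -/
import Mathlib

section
/- (Theorem 1) Let p and q be probability distributions on a finite set of size n ≥ 2 with p_i, q_i > 0. Let Var_std = ∑_{i=1}^n p_i²/q_i − 1 be the variance under q of the standard importance weight p_i/q_i, and let Var_new = (1/(∑_j q_j²)²)·(∑_i p_i² q_i − (∑_i p_i q_i)²) be the variance under q of the group-expectation importance weight p_i/(∑_j q_j²). Then Var_std − Var_new ≥ exp(D_KL(p‖q)) − (n² + 1). -/
/-! Jensen's inequality for `exp` with weights `p` bounds `exp (D_KL(p‖q))` by `∑ pᵢ²/qᵢ`, which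
is `Var_std + 1`. On the other side, the numerator of `Var_new` is at most `∑ pᵢ² qᵢ ≤ ∑ qᵢ = 1`,
and Cauchy–Schwarz gives `1 = (∑ qᵢ)² ≤ n ∑ qᵢ²`, so `Var_new ≤ n²`. -/

open Finset

variable {ι : Type*} (s : Finset ι) {p q : ι → ℝ}

theorem Real.exp_sum_mul_log_div_le_sum_sq_div (hp : ∀ i ∈ s, 0 < p i) (hq : ∀ i ∈ s, 0 < q i)
    (hps : ∑ i ∈ s, p i = 1) :
    Real.exp (∑ i ∈ s, p i * Real.log (p i / q i)) ≤ ∑ i ∈ s, p i ^ 2 / q i := by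
  have hJensen := convexOn_exp.map_sum_le (t := s) (w := p) (p := fun i => Real.log (p i / q i))
    (fun i hi => (hp i hi).le) hps (fun _ _ => trivial)
  refine hJensen.trans_eq (sum_congr rfl fun i hi => ?_)
  rw [smul_eq_mul, Real.exp_log (div_pos (hp i hi) (hq i hi))]
  ring

theorem one_div_sq_sum_sq_le_card_sq (hqs : ∑ i ∈ s, q i = 1) :
    1 / (∑ i ∈ s, q i ^ 2) ^ 2 ≤ (#s : ℝ) ^ 2 := by
  have hCS : (1 : ℝ) ≤ #s * ∑ i ∈ s, q i ^ 2 := by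
    simpa [hqs] using sq_sum_le_card_mul_sum_sq (s := s) (f := q)
  have hpos : 0 < ∑ i ∈ s, q i ^ 2 :=
    pos_of_mul_pos_right (one_pos.trans_le hCS) (Nat.cast_nonneg _)
  rw [div_le_iff₀ (by positivity)]
  nlinarith

theorem sum_sq_mul_sub_sq_sum_mul_le_one (hp : ∀ i ∈ s, 0 ≤ p i) (hq : ∀ i ∈ s, 0 ≤ q i)
    (hps : ∑ i ∈ s, p i = 1) (hqs : ∑ i ∈ s, q i = 1) :
    ∑ i ∈ s, p i ^ 2 * q i - (∑ i ∈ s, p i * q i) ^ 2 ≤ 1 := by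
  have hle : ∑ i ∈ s, p i ^ 2 * q i ≤ ∑ i ∈ s, q i := by
    refine sum_le_sum fun i hi => mul_le_of_le_one_left (hq i hi) ?_
    have hp_le : p i ≤ 1 := hps ▸ single_le_sum hp hi
    exact pow_le_one₀ (hp i hi) hp_le
  nlinarith [sq_nonneg (∑ i ∈ s, p i * q i)]

theorem var_diff_ge_exp_KL_sub_const_general
    (n : ℕ) (p q : Fin n → ℝ)
    (hp : ∀ i, 0 < p i) (hq : ∀ i, 0 < q i)
    (hps : ∑ i, p i = 1) (hqs : ∑ i, q i = 1) :
    ((∑ i, (p i) ^ 2 / q i) - 1)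
      - (1 / (∑ j, (q j) ^ 2) ^ 2)
          * ((∑ i, (p i) ^ 2 * q i) - (∑ i, p i * q i) ^ 2)
      ≥ Real.exp (∑ i, p i * Real.log (p i / q i)) - ((n : ℝ) ^ 2 + 1) := by
  have hstd := Real.exp_sum_mul_log_div_le_sum_sq_div univ (fun i _ => hp i) (fun i _ => hq i) hps
  have hfactor : 1 / (∑ j, q j ^ 2) ^ 2 ≤ (n : ℝ) ^ 2 := by
    simpa using one_div_sq_sum_sq_le_card_sq univ hqs
  have hnum := sum_sq_mul_sub_sq_sum_mul_le_one univ (fun i _ => (hp i).le) (fun i _ => (hq i).le)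
    hps hqs
  have hnew : 1 / (∑ j, q j ^ 2) ^ 2 * (∑ i, p i ^ 2 * q i - (∑ i, p i * q i) ^ 2) ≤ (n : ℝ) ^ 2 :=
    (mul_le_of_le_one_right (by positivity) hnum).trans hfactor
  linarith

/-- Theorem 1: `Var_std − Var_new ≥ exp(D_KL(p‖q)) − (n² + 1)`, where
`Var_std = ∑ p_i²/q_i − 1` and
`Var_new = (1/(∑ q_j²)²)·(∑ p_i² q_i − (∑ p_i q_i)²)`. -/
theorem var_diff_ge_exp_KL_sub_const
    (n : ℕ) (hn : 2 ≤ n) (p q : Fin n → ℝ)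
    (hp : ∀ i, 0 < p i) (hq : ∀ i, 0 < q i)
    (hps : ∑ i, p i = 1) (hqs : ∑ i, q i = 1) :
    ((∑ i, (p i) ^ 2 / q i) - 1)
      - (1 / (∑ j, (q j) ^ 2) ^ 2)
          * ((∑ i, (p i) ^ 2 * q i) - (∑ i, p i * q i) ^ 2)
      ≥ Real.exp (∑ i, p i * Real.log (p i / q i)) - ((n : ℝ) ^ 2 + 1) :=
  var_diff_ge_exp_KL_sub_const_general n p q hp hq hps hqs
end

section
/- (Corollary 1) Let p and q be probability distributions on a finite set of size n ≥ 2 with p_i, q_i > 0. If D_KL(p‖q) > log(n² + 1), then Var_std > Var_new, where Var_std = ∑_{i=1}^n p_i²/q_i − 1 is the variance under q of the standard importance weight p_i/q_i and Var_new = (1/(∑_j q_j²)²)·(∑_i p_i² q_i − (∑_i p_i q_i)²) is the variance under q of the group-expectation importance weight p_i/(∑_j q_j²). -/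
/-- Corollary 1: if `D_KL(p‖q) > log(n² + 1)` then `Var_std > Var_new`. -/
theorem var_std_gt_var_new_of_large_KL
    (n : ℕ) (hn : 2 ≤ n) (p q : Fin n → ℝ)
    (hp : ∀ i, 0 < p i) (hq : ∀ i, 0 < q i)
    (hps : ∑ i, p i = 1) (hqs : ∑ i, q i = 1)
    (hKL : (∑ i, p i * Real.log (p i / q i)) > Real.log ((n : ℝ) ^ 2 + 1)) :
    ((∑ i, (p i) ^ 2 / q i) - 1)
      > (1 / (∑ j, (q j) ^ 2) ^ 2)
          * ((∑ i, (p i) ^ 2 * q i) - (∑ i, p i * q i) ^ 2) := by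
  have hn0 : (0:ℝ) < n := by positivity
  haveI : Nonempty (Fin n) := Fin.pos_iff_nonempty.mp (by omega)
  have hjen : (∑ i, p i * Real.log (p i / q i)) ≤ Real.log (∑ i, p i * (p i / q i)) := by
    have := (strictConcaveOn_log_Ioi.concaveOn).le_map_sum
      (t := Finset.univ) (w := p) (p := fun i => p i / q i)
      (fun i _ => (hp i).le) hps (fun i _ => by
        simp only [Set.mem_Ioi]; exact div_pos (hp i) (hq i))
    simpa [smul_eq_mul] using this
  have hSpos : (0:ℝ) < ∑ i, p i * (p i / q i) :=
    Finset.sum_pos (fun i _ => mul_pos (hp i) (div_pos (hp i) (hq i))) Finset.univ_nonempty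
  have hS : (n:ℝ)^2 + 1 < ∑ i, p i * (p i / q i) := by
    have h := lt_of_lt_of_le hKL hjen
    have h1 : (0:ℝ) < (n:ℝ)^2 + 1 := by positivity
    exact (Real.log_lt_log_iff h1 hSpos).mp h
  have hSeq : (∑ i, p i * (p i / q i)) = ∑ i, (p i)^2 / q i := by
    apply Finset.sum_congr rfl; intro i _
    rw [sq, mul_div_assoc]
  have hple : ∀ i, p i ≤ 1 := by
    intro i
    rw [← hps]
    exact Finset.single_le_sum (fun j _ => (hp j).le) (Finset.mem_univ i)
  have hnum : (∑ i, (p i) ^ 2 * q i) - (∑ i, p i * q i) ^ 2 ≤ 1 := by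
    have h1 : (∑ i, (p i) ^ 2 * q i) ≤ ∑ i, q i := by
      apply Finset.sum_le_sum; intro i _
      have h2 : p i ^ 2 ≤ 1 := by nlinarith [hp i, hple i]
      nlinarith [hq i]
    nlinarith [sq_nonneg (∑ i, p i * q i)]
  have hq2 : (1:ℝ) ≤ (∑ j, (q j)^2) * n := by
    have h := sq_sum_le_card_mul_sum_sq (s := Finset.univ) (f := q)
    rw [hqs] at h
    simp only [Finset.card_univ, Fintype.card_fin, one_pow] at h
    nlinarith [h]
  have hq2pos : (0:ℝ) < ∑ j, (q j)^2 := by nlinarith [hq2, hn0]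
  have hcoef : 1 / (∑ j, (q j) ^ 2) ^ 2 ≤ (n:ℝ)^2 := by
    rw [div_le_iff₀ (by positivity)]
    nlinarith [mul_le_mul hq2 hq2 zero_le_one (by positivity : (0:ℝ) ≤ (∑ j, (q j)^2) * n)]
  have hnumpos : (0:ℝ) ≤ (∑ i, (p i) ^ 2 * q i) - (∑ i, p i * q i) ^ 2 := by
    have hcs := Finset.sum_mul_sq_le_sq_mul_sq Finset.univ
      (fun i => p i * Real.sqrt (q i)) (fun i => Real.sqrt (q i))
    have he1 : ∀ i : Fin n, (p i * Real.sqrt (q i)) * Real.sqrt (q i) = p i * q i := by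
      intro i
      rw [mul_assoc, Real.mul_self_sqrt (hq i).le]
    have he2 : ∀ i : Fin n, (p i * Real.sqrt (q i))^2 = p i ^ 2 * q i := by
      intro i
      rw [mul_pow, Real.sq_sqrt (hq i).le]
    have he3 : ∀ i : Fin n, (Real.sqrt (q i))^2 = q i := fun i => Real.sq_sqrt (hq i).le
    simp only [he1, he2, he3] at hcs
    rw [hqs, mul_one] at hcs
    linarith
  have hrhs : (1 / (∑ j, (q j) ^ 2) ^ 2) * ((∑ i, (p i) ^ 2 * q i) - (∑ i, p i * q i) ^ 2)
      ≤ (n:ℝ)^2 := by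
    calc _ ≤ (n:ℝ)^2 * ((∑ i, (p i) ^ 2 * q i) - (∑ i, p i * q i) ^ 2) :=
          mul_le_mul_of_nonneg_right hcoef hnumpos
      _ ≤ (n:ℝ)^2 * 1 := mul_le_mul_of_nonneg_left hnum (by positivity)
      _ = (n:ℝ)^2 := by ring
  rw [hSeq] at hS
  linarith
end
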